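/- arXiv:2211.13028 — 2 statements merged into one kernel-verified Lean document; each statement's English description precedes it below -/
import Mathlib

section
/- Let B be an m×n real matrix, U an m×p matrix with orthonormal columns, and V an n×k matrix with orthonormal columns. Then for each i with 1 ≤ i ≤ min{p,k}, the i-th largest singular value of A = Uᵀ B V satisfies σ_i(A) ≤ σ_i(B). -/
open Matrix

/-- The `i`-th largest singular value (0-indexed) of a real matrix `A`,
defined as the square root of the `i`-th largest eigenvalue of `A * Aᵀ`. -/
noncomputable def sval {m n : Type*} [Fintype m] [DecidableEq m] [Fintype n]
    (A : Matrix m n ℝ) (i : ℕ) : ℝ :=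
  Real.sqrt (((Finset.univ.val.map
    (Matrix.isHermitian_mul_conjTranspose_self A).eigenvalues).sort (· ≤ ·)).reverse.getD i 0)


noncomputable def lamDesc {n : ℕ} {M : Matrix (Fin n) (Fin n) ℝ} (hM : M.IsHermitian) (i : ℕ) : ℝ :=
  ((Finset.univ.val.map hM.eigenvalues).sort (· ≤ ·)).reverse.getD i 0

lemma lamDesc_exists_finsets {n : ℕ} {M : Matrix (Fin n) (Fin n) ℝ} (hM : M.IsHermitian)
    (i : ℕ) (hi : i < n) :
    ∃ S T : Finset (Fin n), S.card = i + 1 ∧ T.card = n - i ∧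
      (∀ j ∈ S, lamDesc hM i ≤ hM.eigenvalues j) ∧
      (∀ j ∈ T, hM.eigenvalues j ≤ lamDesc hM i) := by
  set e := hM.eigenvalues with he
  set σ := Tuple.sort e with hσ
  have hmono : Monotone (e ∘ σ) := Tuple.monotone_sort e
  have hl : (Finset.univ.val.map e).sort (· ≤ ·) = List.ofFn (e ∘ σ) := by
    apply List.Perm.eq_of_pairwise' (Multiset.pairwise_sort _ _) (hmono.sortedLE_ofFn.pairwise)
    rw [← Multiset.coe_eq_coe, Multiset.sort_eq, List.ofFn_eq_map, ← Multiset.map_coe]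
    have h1 : ((List.finRange n : List (Fin n)) : Multiset (Fin n)) = Finset.univ.val := by
      simp [Finset.univ, Fintype.elems, Fin.fintype]
    rw [h1]
    have h2 : Finset.univ.val.map (e ∘ σ) = (Finset.univ.val.map σ).map e := by
      rw [Multiset.map_map]
    have h3 : Multiset.map ⇑σ Finset.univ.val = Finset.univ.val := by
      conv_rhs => rw [← Finset.map_univ_equiv σ]
      rw [Finset.map_val]
      rfl
    rw [h2, h3]
  have hlen : (List.ofFn (e ∘ σ)).length = n := by simp
  have hval : lamDesc hM i = (e ∘ σ) ⟨n - 1 - i, by omega⟩ := by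
    rw [lamDesc, hl]
    have h1 : i < (List.ofFn (e ∘ σ)).reverse.length := by simp; omega
    rw [List.getD_eq_getElem _ _ h1, List.getElem_reverse]
    simp only [List.getElem_ofFn]
    congr 1
    simp [hlen]
  set a : Fin n := ⟨n - 1 - i, by omega⟩ with ha
  refine ⟨(Finset.Ici a).image σ, (Finset.Iic a).image σ, ?_, ?_, ?_, ?_⟩
  · rw [Finset.card_image_of_injective _ σ.injective, Fin.card_Ici]
    simp [ha]; omega
  · rw [Finset.card_image_of_injective _ σ.injective, Fin.card_Iic]
    simp [ha]; omega
  · intro j hj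
    obtain ⟨b, hb, rfl⟩ := Finset.mem_image.mp hj
    rw [hval]
    exact hmono (Finset.mem_Ici.mp hb)
  · intro j hj
    obtain ⟨b, hb, rfl⟩ := Finset.mem_image.mp hj
    rw [hval]
    exact hmono (Finset.mem_Iic.mp hb)

section spec
variable {n : ℕ} {M : Matrix (Fin n) (Fin n) ℝ} (hM : M.IsHermitian)

lemma star_eq_transpose_real (Q : Matrix (Fin n) (Fin n) ℝ) : star Q = Qᵀ := by
  rw [Matrix.star_eq_conjTranspose, Matrix.conjTranspose_eq_transpose_of_trivial]

lemma QtQ : ((hM.eigenvectorUnitary : Matrix (Fin n) (Fin n) ℝ))ᵀ *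
    (hM.eigenvectorUnitary : Matrix (Fin n) (Fin n) ℝ) = 1 := by
  rw [← star_eq_transpose_real]
  exact (Unitary.mem_iff.mp hM.eigenvectorUnitary.2).1

lemma QQt : (hM.eigenvectorUnitary : Matrix (Fin n) (Fin n) ℝ) *
    (hM.eigenvectorUnitary : Matrix (Fin n) (Fin n) ℝ)ᵀ = 1 := by
  rw [← star_eq_transpose_real]
  exact (Unitary.mem_iff.mp hM.eigenvectorUnitary.2).2

lemma spec_real : M = (hM.eigenvectorUnitary : Matrix (Fin n) (Fin n) ℝ) *
    Matrix.diagonal hM.eigenvalues * (hM.eigenvectorUnitary : Matrix (Fin n) (Fin n) ℝ)ᵀ := by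
  conv_lhs => rw [hM.spectral_theorem]
  rw [← star_eq_transpose_real]
  congr 1

-- coordinates
lemma qform_eq (x : Fin n → ℝ) :
    x ⬝ᵥ (M *ᵥ x) = ∑ j, hM.eigenvalues j *
      (((hM.eigenvectorUnitary : Matrix (Fin n) (Fin n) ℝ)ᵀ *ᵥ x) j)^2 := by
  set Q := (hM.eigenvectorUnitary : Matrix (Fin n) (Fin n) ℝ)
  set c := Qᵀ *ᵥ x with hc
  conv_lhs => rw [spec_real hM]
  rw [← Matrix.mulVec_mulVec, ← Matrix.mulVec_mulVec, Matrix.dotProduct_mulVec,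
    ← Matrix.mulVec_transpose]
  simp only [← hc, Matrix.mulVec_diagonal, dotProduct]
  exact Finset.sum_congr rfl fun j _ => by ring

lemma norm_eq (x : Fin n → ℝ) :
    x ⬝ᵥ x = ∑ j, (((hM.eigenvectorUnitary : Matrix (Fin n) (Fin n) ℝ)ᵀ *ᵥ x) j)^2 := by
  set Q := (hM.eigenvectorUnitary : Matrix (Fin n) (Fin n) ℝ)
  have : x ⬝ᵥ x = x ⬝ᵥ ((Q * Qᵀ) *ᵥ x) := by rw [QQt hM, Matrix.one_mulVec]
  rw [this, ← Matrix.mulVec_mulVec, Matrix.dotProduct_mulVec, ← Matrix.mulVec_transpose]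
  simp only [dotProduct]
  exact Finset.sum_congr rfl fun j _ => by ring

/-- the eigenvector columns -/
noncomputable def evCol (j : Fin n) : Fin n → ℝ :=
  fun i => (hM.eigenvectorUnitary : Matrix (Fin n) (Fin n) ℝ) i j

lemma coord_evCol (s j : Fin n) :
    ((hM.eigenvectorUnitary : Matrix (Fin n) (Fin n) ℝ)ᵀ *ᵥ evCol hM s) j
      = if j = s then 1 else 0 := by
  have : ((hM.eigenvectorUnitary : Matrix (Fin n) (Fin n) ℝ)ᵀ *ᵥ evCol hM s) j
      = ((hM.eigenvectorUnitary : Matrix (Fin n) (Fin n) ℝ)ᵀ *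
        (hM.eigenvectorUnitary : Matrix (Fin n) (Fin n) ℝ)) j s := by
    simp [Matrix.mulVec, Matrix.mul_apply, evCol, dotProduct]
  rw [this, QtQ hM, Matrix.one_apply]

lemma coord_vanish {S : Finset (Fin n)} {x : Fin n → ℝ}
    (hx : x ∈ Submodule.span ℝ (evCol hM '' ↑S)) {j : Fin n} (hj : j ∉ S) :
    ((hM.eigenvectorUnitary : Matrix (Fin n) (Fin n) ℝ)ᵀ *ᵥ x) j = 0 := by
  induction hx using Submodule.span_induction with
  | mem y hy =>
    obtain ⟨s, hs, rfl⟩ := hy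
    rw [coord_evCol, if_neg]
    rintro rfl; exact hj hs
  | zero => simp
  | add y z _ _ hy hz => rw [Matrix.mulVec_add]; simp [hy, hz]
  | smul a y _ hy => rw [Matrix.mulVec_smul]; simp [hy]

lemma finrank_span_evCol (S : Finset (Fin n)) :
    Module.finrank ℝ (Submodule.span ℝ (evCol hM '' ↑S)) = S.card := by
  have hli : LinearIndependent ℝ (fun s : S => evCol hM s) := by
    rw [Fintype.linearIndependent_iff]
    intro g hg s₀
    set φ : (Fin n → ℝ) →ₗ[ℝ] ℝ :=
      (LinearMap.proj (↑s₀ : Fin n)).comp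
        (Matrix.mulVecLin (hM.eigenvectorUnitary : Matrix (Fin n) (Fin n) ℝ)ᵀ) with hφ
    have h2 := congrArg φ hg
    rw [map_sum, map_zero] at h2
    have h3 : ∀ s : S, φ (g s • evCol hM s) = g s * (if (↑s₀ : Fin n) = ↑s then 1 else 0) := by
      intro s
      rw [_root_.map_smul, hφ]
      simp only [LinearMap.comp_apply, Matrix.mulVecLin_apply, LinearMap.proj_apply,
        smul_eq_mul]
      rw [coord_evCol hM]
    rw [Finset.sum_congr rfl (fun s _ => h3 s)] at h2
    rw [Finset.sum_eq_single s₀ (by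
      intro b _ hb
      rw [if_neg (by exact fun h => hb (Subtype.ext h.symm)), mul_zero])
      (by intro h; exact absurd (Finset.mem_univ s₀) h)] at h2
    simpa using h2
  have h4 := finrank_span_eq_card hli
  rw [show (Set.range fun s : S => evCol hM ↑s) = evCol hM '' ↑S from
    (Set.image_eq_range _ _).symm] at h4
  rw [h4]
  simp

lemma qform_restrict {S : Finset (Fin n)} {x : Fin n → ℝ}
    (hx : x ∈ Submodule.span ℝ (evCol hM '' ↑S)) :
    x ⬝ᵥ (M *ᵥ x) = ∑ j ∈ S, hM.eigenvalues j *
      (((hM.eigenvectorUnitary : Matrix (Fin n) (Fin n) ℝ)ᵀ *ᵥ x) j)^2 ∧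
    x ⬝ᵥ x = ∑ j ∈ S, (((hM.eigenvectorUnitary : Matrix (Fin n) (Fin n) ℝ)ᵀ *ᵥ x) j)^2 := by
  constructor
  · rw [qform_eq hM x]
    refine (Finset.sum_subset (Finset.subset_univ S) ?_).symm
    intro j _ hj
    rw [coord_vanish hM hx hj]
    ring
  · rw [norm_eq hM x]
    refine (Finset.sum_subset (Finset.subset_univ S) ?_).symm
    intro j _ hj
    rw [coord_vanish hM hx hj]
    ring

lemma lamDesc_lemA {n : ℕ} {M : Matrix (Fin n) (Fin n) ℝ} (hM : M.IsHermitian)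
    (i : ℕ) (hi : i < n) :
    ∃ W : Submodule ℝ (Fin n → ℝ), Module.finrank ℝ W = i + 1 ∧
      ∀ x ∈ W, lamDesc hM i * (x ⬝ᵥ x) ≤ x ⬝ᵥ (M *ᵥ x) := by
  obtain ⟨S, T, hScard, _, hSlo, _⟩ := lamDesc_exists_finsets hM i hi
  refine ⟨Submodule.span ℝ (evCol hM '' ↑S), by rw [finrank_span_evCol hM S, hScard], ?_⟩
  intro x hx
  obtain ⟨hq, hn⟩ := qform_restrict hM hx
  rw [hq, hn, Finset.mul_sum]
  refine Finset.sum_le_sum fun j hj => ?_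
  exact mul_le_mul_of_nonneg_right (hSlo j hj) (sq_nonneg _)

lemma lamDesc_lemB {n : ℕ} {M : Matrix (Fin n) (Fin n) ℝ} (hM : M.IsHermitian)
    (i : ℕ) (hi : i < n) (W : Submodule ℝ (Fin n → ℝ)) (hW : i + 1 ≤ Module.finrank ℝ W) :
    ∃ x ∈ W, x ≠ 0 ∧ x ⬝ᵥ (M *ᵥ x) ≤ lamDesc hM i * (x ⬝ᵥ x) := by
  obtain ⟨S, T, _, hTcard, _, hThi⟩ := lamDesc_exists_finsets hM i hi
  set W' := Submodule.span ℝ (evCol hM '' ↑T) with hW'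
  have hd : Module.finrank ℝ W' = n - i := by rw [hW', finrank_span_evCol hM T, hTcard]
  have hsum := Submodule.finrank_sup_add_finrank_inf_eq W W'
  have htop : Module.finrank ℝ (W ⊔ W' : Submodule ℝ (Fin n → ℝ)) ≤ n := by
    have := Submodule.finrank_le (W ⊔ W' : Submodule ℝ (Fin n → ℝ))
    simpa [Module.finrank_pi] using this
  have hpos : 0 < Module.finrank ℝ (W ⊓ W' : Submodule ℝ (Fin n → ℝ)) := by omega
  have hne : (W ⊓ W' : Submodule ℝ (Fin n → ℝ)) ≠ ⊥ := by
    intro h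
    rw [h, finrank_bot] at hpos
    exact lt_irrefl 0 hpos
  obtain ⟨x, hx, hx0⟩ := Submodule.exists_mem_ne_zero_of_ne_bot hne
  refine ⟨x, (Submodule.mem_inf.mp hx).1, hx0, ?_⟩
  obtain ⟨hq, hn⟩ := qform_restrict hM (Submodule.mem_inf.mp hx).2
  rw [hq, hn, Finset.mul_sum]
  refine Finset.sum_le_sum fun j hj => ?_
  exact mul_le_mul_of_nonneg_right (hThi j hj) (sq_nonneg _)

end spec

lemma dot_shift {a b : ℕ} (A : Matrix (Fin a) (Fin b) ℝ) (x : Fin b → ℝ) (w : Fin a → ℝ) :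
    (A *ᵥ x) ⬝ᵥ w = x ⬝ᵥ (Aᵀ *ᵥ w) := by
  rw [Matrix.dotProduct_mulVec, Matrix.vecMul_transpose]

lemma dot_self_nonneg {a : ℕ} (x : Fin a → ℝ) : 0 ≤ x ⬝ᵥ x :=
  Finset.sum_nonneg fun i _ => mul_self_nonneg _

lemma orth_norm {a b : ℕ} {U : Matrix (Fin a) (Fin b) ℝ} (hU : Uᵀ * U = 1)
    (x : Fin b → ℝ) : (U *ᵥ x) ⬝ᵥ (U *ᵥ x) = x ⬝ᵥ x := by
  rw [dot_shift, Matrix.mulVec_mulVec, hU, Matrix.one_mulVec]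

lemma orth_contract {a b : ℕ} {V : Matrix (Fin a) (Fin b) ℝ} (hV : Vᵀ * V = 1)
    (y : Fin a → ℝ) : (Vᵀ *ᵥ y) ⬝ᵥ (Vᵀ *ᵥ y) ≤ y ⬝ᵥ y := by
  set c := Vᵀ *ᵥ y with hc
  set z := y - V *ᵥ c with hz
  have h1 : (V *ᵥ c) ⬝ᵥ (V *ᵥ c) = c ⬝ᵥ c := orth_norm hV c
  have h2 : y ⬝ᵥ (V *ᵥ c) = c ⬝ᵥ c := by
    have h := dot_shift Vᵀ y c
    rw [Matrix.transpose_transpose] at h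
    rw [← h]
  have h3 : 0 ≤ z ⬝ᵥ z := dot_self_nonneg z
  have h4 : z ⬝ᵥ z = y ⬝ᵥ y - c ⬝ᵥ c := by
    rw [hz, sub_dotProduct, dotProduct_sub, dotProduct_sub, h1, h2,
      dotProduct_comm (V *ᵥ c) y, h2]
    ring
  linarith
lemma lamDesc_conj_le {m p : ℕ} {M : Matrix (Fin m) (Fin m) ℝ} (hM : M.IsHermitian)
    (U : Matrix (Fin m) (Fin p) ℝ) (hU : Uᵀ * U = 1)
    {N : Matrix (Fin p) (Fin p) ℝ} (hN : N.IsHermitian)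
    (hq : ∀ x : Fin p → ℝ, x ⬝ᵥ (N *ᵥ x) ≤ (U *ᵥ x) ⬝ᵥ (M *ᵥ (U *ᵥ x)))
    (i : ℕ) (hi : i < p) : lamDesc hN i ≤ lamDesc hM i := by
  have hpm : p ≤ m := by
    have h1 : (Uᵀ * U).rank = Fintype.card (Fin p) := by rw [hU, Matrix.rank_one]
    have h2 := Matrix.rank_mul_le_right Uᵀ U
    have h3 := Matrix.rank_le_card_height U
    simp only [Fintype.card_fin] at h1 h3
    omega
  obtain ⟨W, hWr, hWq⟩ := lamDesc_lemA hN i hi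
  set L := Matrix.mulVecLin U with hL
  have hinj : Function.Injective L := by
    intro x y hxy
    have : U *ᵥ (x - y) = 0 := by
      rw [Matrix.mulVec_sub]
      simpa [hL, Matrix.mulVecLin_apply] using sub_eq_zero_of_eq hxy
    have h0 : (x - y) ⬝ᵥ (x - y) = 0 := by
      rw [← orth_norm hU (x - y), this]
      simp
    exact sub_eq_zero.mp (dotProduct_self_eq_zero.mp h0)
  have hWr' : Module.finrank ℝ (W.map L) = i + 1 := by
    rw [← hWr]
    exact (Submodule.equivMapOfInjective L hinj W).finrank_eq.symm
  obtain ⟨y, hyW, hy0, hyq⟩ := lamDesc_lemB hM i (lt_of_lt_of_le hi hpm) (W.map L) (le_of_eq hWr'.symm)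
  obtain ⟨x, hxW, rfl⟩ := Submodule.mem_map.mp hyW
  have hx0 : x ≠ 0 := fun h => hy0 (by rw [h, map_zero])
  have hLx : L x = U *ᵥ x := rfl
  have hxx : (0:ℝ) < x ⬝ᵥ x := by
    rcases lt_or_eq_of_le (dot_self_nonneg x) with h | h
    · exact h
    · exact absurd (dotProduct_self_eq_zero.mp h.symm) hx0
  have hchain : lamDesc hN i * (x ⬝ᵥ x) ≤ lamDesc hM i * (x ⬝ᵥ x) := by
    calc lamDesc hN i * (x ⬝ᵥ x) ≤ x ⬝ᵥ (N *ᵥ x) := hWq x hxW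
      _ ≤ (U *ᵥ x) ⬝ᵥ (M *ᵥ (U *ᵥ x)) := hq x
      _ ≤ lamDesc hM i * ((U *ᵥ x) ⬝ᵥ (U *ᵥ x)) := by rw [← hLx]; exact hyq
      _ = lamDesc hM i * (x ⬝ᵥ x) := by rw [orth_norm hU]
  exact le_of_mul_le_mul_right hchain hxx

/-- If `B` is `m × n`, `U` is `m × p` with orthonormal columns, and `V` is `n × k`
with orthonormal columns, then each singular value of `A = Uᵀ * B * V` is bounded by
the corresponding singular value of `B`. -/
theorem sval_conj_orthonormal_le {m n p k : ℕ}
    (B : Matrix (Fin m) (Fin n) ℝ)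
    (U : Matrix (Fin m) (Fin p) ℝ) (hU : Uᵀ * U = 1)
    (V : Matrix (Fin n) (Fin k) ℝ) (hV : Vᵀ * V = 1) :
    ∀ i : ℕ, i < min p k → sval (Uᵀ * B * V) i ≤ sval B i := by
  intro i hik
  have hip : i < p := lt_of_lt_of_le hik (min_le_left _ _)
  set A := Uᵀ * B * V with hA
  have hAh := Matrix.isHermitian_mul_conjTranspose_self A
  have hBh := Matrix.isHermitian_mul_conjTranspose_self B
  have key : lamDesc hAh i ≤ lamDesc hBh i := by
    apply lamDesc_conj_le hBh U hU hAh ?_ i hip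
    intro x
    have hAt : Aᴴ = Aᵀ := Matrix.conjTranspose_eq_transpose_of_trivial A
    have hBt : Bᴴ = Bᵀ := Matrix.conjTranspose_eq_transpose_of_trivial B
    rw [hAt, hBt]
    have e1 : (Aᵀ *ᵥ x) ⬝ᵥ (Aᵀ *ᵥ x) = x ⬝ᵥ ((A * Aᵀ) *ᵥ x) := by
      rw [dot_shift Aᵀ x (Aᵀ *ᵥ x), Matrix.transpose_transpose, Matrix.mulVec_mulVec]
    have e2 : (Bᵀ *ᵥ (U *ᵥ x)) ⬝ᵥ (Bᵀ *ᵥ (U *ᵥ x))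
        = (U *ᵥ x) ⬝ᵥ ((B * Bᵀ) *ᵥ (U *ᵥ x)) := by
      rw [dot_shift Bᵀ (U *ᵥ x) (Bᵀ *ᵥ (U *ᵥ x)), Matrix.transpose_transpose,
        Matrix.mulVec_mulVec]
    rw [← e1, ← e2]
    have hs : Aᵀ *ᵥ x = Vᵀ *ᵥ (Bᵀ *ᵥ (U *ᵥ x)) := by
      rw [hA, Matrix.transpose_mul, Matrix.transpose_mul, Matrix.transpose_transpose]
      rw [Matrix.mulVec_mulVec, Matrix.mulVec_mulVec, Matrix.mul_assoc]
    rw [hs]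
    exact orth_contract hV _
  have h1 : sval A i = Real.sqrt (lamDesc hAh i) := rfl
  have h2 : sval B i = Real.sqrt (lamDesc hBh i) := rfl
  rw [h1, h2]
  exact Real.sqrt_le_sqrt key
end

section
/- Let X be a d-way tensor of size n₁×⋯×n_d and let P_j ∈ ℝ^{n_j×n_j}, j = 1,…,d, be orthogonal projectors (P_j² = P_j = P_jᵀ). Then ‖X − X ×₁ P₁ ×₂ ⋯ ×_d P_d‖² = ∑_{j=1}^d ‖X ×₁ P₁ ⋯ ×_{j−1} P_{j−1} ×_j (I − P_j)‖² ≤ ∑_{j=1}^d ‖X − X ×_j P_j‖². -/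
/-!
The differences `X ×₁ P₁ ⋯ ×_{j-1} P_{j-1} ×_j (I - P_j)` telescope to
`X - X ×₁ P₁ ⋯ ×_d P_d` and are pairwise orthogonal: for `j < k` the `k`-th one is fixed by
`P_j` in mode `j`, while the `j`-th one is annihilated by it, so Pythagoras gives the equality.
Products in different modes commute, so the `j`-th difference is `X ×_j (I - P_j)` multiplied
by `P₁, …, P_{j-1}`, and orthogonal projectors do not increase the norm.
-/

open Matrix

/-- The squared tensor (Frobenius) norm of a `d`-way tensor. -/
noncomputable def tnorm2 {d : ℕ} {n : Fin d → ℕ} (X : ((j : Fin d) → Fin (n j)) → ℝ) : ℝ :=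
  ∑ i : (j : Fin d) → Fin (n j), X i ^ 2

/-- The mode-`j` tensor-times-matrix product with a square matrix acting on mode `j`. -/
noncomputable def ttm {d : ℕ} {n : Fin d → ℕ} (X : ((j : Fin d) → Fin (n j)) → ℝ)
    (j : Fin d) (A : Matrix (Fin (n j)) (Fin (n j)) ℝ) : ((j : Fin d) → Fin (n j)) → ℝ :=
  fun i => ∑ k, A (i j) k * X (Function.update i j k)

/-- `ttmUpTo X P m` is `X ×₁ P₁ ×₂ ⋯ ×ₘ Pₘ`, i.e. `X` multiplied in modes `0, …, m-1`
(and all modes when `m = d`). -/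
noncomputable def ttmUpTo {d : ℕ} {n : Fin d → ℕ} (X : ((j : Fin d) → Fin (n j)) → ℝ)
    (P : (j : Fin d) → Matrix (Fin (n j)) (Fin (n j)) ℝ) : ℕ → ((j : Fin d) → Fin (n j)) → ℝ
  | 0 => X
  | m + 1 => if h : m < d then ttm (ttmUpTo X P m) ⟨m, h⟩ (P ⟨m, h⟩) else ttmUpTo X P m

section

variable {d : ℕ} {n : Fin d → ℕ}

lemma tnorm2_eq_dotProduct (X : ((j : Fin d) → Fin (n j)) → ℝ) : tnorm2 X = X ⬝ᵥ X := by
  simp only [tnorm2, dotProduct, sq]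

lemma tnorm2_nonneg (X : ((j : Fin d) → Fin (n j)) → ℝ) : 0 ≤ tnorm2 X :=
  Finset.sum_nonneg fun _ _ => sq_nonneg _

lemma tnorm2_add_of_dotProduct_eq_zero {X Y : ((j : Fin d) → Fin (n j)) → ℝ}
    (h : X ⬝ᵥ Y = 0) : tnorm2 (X + Y) = tnorm2 X + tnorm2 Y := by
  simp only [tnorm2_eq_dotProduct, add_dotProduct, dotProduct_add, dotProduct_comm Y X, h]
  ring

lemma tnorm2_sum_of_pairwise_dotProduct_eq_zero {ι : Type*} [Fintype ι]
    (X : ι → ((j : Fin d) → Fin (n j)) → ℝ) (h : Pairwise fun a b => X a ⬝ᵥ X b = 0) :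
    tnorm2 (∑ a, X a) = ∑ a, tnorm2 (X a) := by
  simp only [tnorm2_eq_dotProduct, sum_dotProduct, dotProduct_sum]
  refine Finset.sum_congr rfl fun a _ => ?_
  exact Finset.sum_eq_single a (fun b _ hba => h hba) (by simp)

lemma ttm_one (X : ((j : Fin d) → Fin (n j)) → ℝ) (j : Fin d) : ttm X j 1 = X := by
  funext i
  simp [ttm, one_apply]

lemma ttm_zero (X : ((j : Fin d) → Fin (n j)) → ℝ) (j : Fin d) : ttm X j 0 = 0 := by
  funext i
  simp [ttm]

lemma ttm_sub (X : ((j : Fin d) → Fin (n j)) → ℝ) (j : Fin d)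
    (A B : Matrix (Fin (n j)) (Fin (n j)) ℝ) : ttm X j (A - B) = ttm X j A - ttm X j B := by
  funext i
  simp [ttm, sub_mul, Finset.sum_sub_distrib]

lemma sub_ttm_eq_ttm_one_sub (X : ((j : Fin d) → Fin (n j)) → ℝ) (j : Fin d)
    (A : Matrix (Fin (n j)) (Fin (n j)) ℝ) : X - ttm X j A = ttm X j (1 - A) := by
  rw [ttm_sub, ttm_one]

lemma ttm_ttm (X : ((j : Fin d) → Fin (n j)) → ℝ) (j : Fin d)
    (A B : Matrix (Fin (n j)) (Fin (n j)) ℝ) : ttm (ttm X j A) j B = ttm X j (B * A) := by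
  funext i
  simp only [ttm, mul_apply, Finset.mul_sum, Finset.sum_mul, Function.update_self,
    Function.update_idem]
  rw [Finset.sum_comm]
  exact Finset.sum_congr rfl fun _ _ => Finset.sum_congr rfl fun _ _ => by ring

lemma ttm_ttm_comm (X : ((j : Fin d) → Fin (n j)) → ℝ) {j k : Fin d} (hjk : j ≠ k)
    (A : Matrix (Fin (n j)) (Fin (n j)) ℝ) (B : Matrix (Fin (n k)) (Fin (n k)) ℝ) :
    ttm (ttm X j A) k B = ttm (ttm X k B) j A := by
  funext i
  simp only [ttm, Finset.mul_sum]
  rw [Finset.sum_comm]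
  refine Finset.sum_congr rfl fun a _ => Finset.sum_congr rfl fun b _ => ?_
  rw [Function.update_of_ne hjk, Function.update_of_ne hjk.symm, Function.update_comm hjk]
  ring

lemma ttm_dotProduct (X Y : ((j : Fin d) → Fin (n j)) → ℝ) (j : Fin d)
    (A : Matrix (Fin (n j)) (Fin (n j)) ℝ) : ttm X j A ⬝ᵥ Y = X ⬝ᵥ ttm Y j Aᵀ := by
  -- swap the summation index `i` with `update i j k`, which exchanges `i j` and `k`
  have hswap : Function.Involutive fun p : ((j : Fin d) → Fin (n j)) × Fin (n j) =>
      (Function.update p.1 j p.2, p.1 j) := fun p => by simp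
  simp only [dotProduct, ttm, Finset.sum_mul, Finset.mul_sum]
  rw [← Fintype.sum_prod_type', ← Fintype.sum_prod_type', ← Equiv.sum_comp (hswap.toPerm _)]
  refine Finset.sum_congr rfl fun p _ => ?_
  simp only [Function.Involutive.coe_toPerm, transpose_apply, Function.update_self,
    Function.update_idem, Function.update_eq_self]
  ring

lemma ttm_dotProduct_ttm_eq_zero (X Y : ((j : Fin d) → Fin (n j)) → ℝ) (j : Fin d)
    {A B : Matrix (Fin (n j)) (Fin (n j)) ℝ} (h : Aᵀ * B = 0) :
    ttm X j A ⬝ᵥ ttm Y j B = 0 := by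
  rw [ttm_dotProduct, ttm_ttm, h, ttm_zero, dotProduct_zero]

lemma tnorm2_ttm_le (X : ((j : Fin d) → Fin (n j)) → ℝ) (j : Fin d)
    {Q : Matrix (Fin (n j)) (Fin (n j)) ℝ} (hQ : IsIdempotentElem Q) (hQs : Q.IsSymm) :
    tnorm2 (ttm X j Q) ≤ tnorm2 X := by
  have horth : ttm X j Q ⬝ᵥ ttm X j (1 - Q) = 0 :=
    ttm_dotProduct_ttm_eq_zero X X j (by rw [hQs.eq, mul_sub, mul_one, hQ.eq, sub_self])
  calc tnorm2 (ttm X j Q) ≤ tnorm2 (ttm X j Q) + tnorm2 (ttm X j (1 - Q)) :=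
        le_add_of_nonneg_right (tnorm2_nonneg _)
    _ = tnorm2 X := by
        rw [← tnorm2_add_of_dotProduct_eq_zero horth, ← sub_ttm_eq_ttm_one_sub, add_sub_cancel]

end

section ttmUpTo

variable {d : ℕ} {n : Fin d → ℕ} (X : ((j : Fin d) → Fin (n j)) → ℝ)
  (P : (j : Fin d) → Matrix (Fin (n j)) (Fin (n j)) ℝ)

lemma ttmUpTo_succ_of_lt {m : ℕ} (hm : m < d) :
    ttmUpTo X P (m + 1) = ttm (ttmUpTo X P m) ⟨m, hm⟩ (P ⟨m, hm⟩) :=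
  dif_pos hm

lemma ttmUpTo_succ_of_le {m : ℕ} (hm : d ≤ m) : ttmUpTo X P (m + 1) = ttmUpTo X P m :=
  dif_neg hm.not_gt

lemma sub_ttmUpTo_eq_sum :
    X - ttmUpTo X P d = ∑ j : Fin d, ttm (ttmUpTo X P j) j (1 - P j) := by
  have hstep (j : Fin d) :
      ttm (ttmUpTo X P j) j (1 - P j) = ttmUpTo X P j - ttmUpTo X P (j + 1) := by
    rw [← sub_ttm_eq_ttm_one_sub, ttmUpTo_succ_of_lt X P j.isLt]
  simp only [hstep]
  rw [Fin.sum_univ_eq_sum_range (fun m => ttmUpTo X P m - ttmUpTo X P (m + 1)),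
    Finset.sum_range_sub']
  rfl

lemma ttm_ttmUpTo_of_le (j : Fin d) (Q : Matrix (Fin (n j)) (Fin (n j)) ℝ) {m : ℕ}
    (hm : m ≤ j) : ttm (ttmUpTo X P m) j Q = ttmUpTo (ttm X j Q) P m := by
  induction m with
  | zero => rfl
  | succ m ih =>
    have hmd : m < d := by omega
    have hne : (⟨m, hmd⟩ : Fin d) ≠ j := by simp only [ne_eq, Fin.ext_iff]; omega
    rw [ttmUpTo_succ_of_lt _ _ hmd, ttmUpTo_succ_of_lt _ _ hmd, ttm_ttm_comm _ hne, ih (by omega)]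

lemma ttm_ttmUpTo_of_lt {j : Fin d} (hP : IsIdempotentElem (P j)) {m : ℕ} (hm : j < m) :
    ttm (ttmUpTo X P m) j (P j) = ttmUpTo X P m := by
  induction m with
  | zero => omega
  | succ m ih =>
    by_cases hmd : m < d
    · rw [ttmUpTo_succ_of_lt _ _ hmd]
      rcases (Nat.lt_succ_iff.mp hm).lt_or_eq with hjm | hjm
      · have hne : j ≠ ⟨m, hmd⟩ := by simp only [ne_eq, Fin.ext_iff]; omega
        rw [← ttm_ttm_comm _ hne, ih hjm]
      · obtain rfl : j = ⟨m, hmd⟩ := Fin.ext hjm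
        rw [ttm_ttm, hP.eq]
    · rw [ttmUpTo_succ_of_le _ _ (not_lt.mp hmd), ih (by omega)]

lemma tnorm2_ttmUpTo_le (hP : ∀ j, IsIdempotentElem (P j)) (hPs : ∀ j, (P j).IsSymm) (m : ℕ) :
    tnorm2 (ttmUpTo X P m) ≤ tnorm2 X := by
  induction m with
  | zero => rfl
  | succ m ih =>
    by_cases hmd : m < d
    · rw [ttmUpTo_succ_of_lt _ _ hmd]
      exact (tnorm2_ttm_le _ _ (hP _) (hPs _)).trans ih
    · rwa [ttmUpTo_succ_of_le _ _ (not_lt.mp hmd)]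

lemma pairwise_dotProduct_ttmUpTo_one_sub_eq_zero (hP : ∀ j, IsIdempotentElem (P j))
    (hPs : ∀ j, (P j).IsSymm) :
    Pairwise fun j k : Fin d =>
      ttm (ttmUpTo X P j) j (1 - P j) ⬝ᵥ ttm (ttmUpTo X P k) k (1 - P k) = 0 := by
  have hlt {j k : Fin d} (hjk : j < k) :
      ttm (ttmUpTo X P j) j (1 - P j) ⬝ᵥ ttm (ttmUpTo X P k) k (1 - P k) = 0 := by
    rw [← ttm_ttmUpTo_of_lt X P (hP j) hjk, ttm_ttm_comm _ hjk.ne]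
    apply ttm_dotProduct_ttm_eq_zero
    rw [transpose_sub, transpose_one, (hPs j).eq, sub_mul, one_mul, (hP j).eq, sub_self]
  intro j k hjk
  rcases hjk.lt_or_gt with h | h
  · exact hlt h
  · rw [dotProduct_comm]
    exact hlt h

end ttmUpTo

/-- For orthogonal projectors `P₁, …, P_d`,
`‖X − X ×₁ P₁ ⋯ ×_d P_d‖² = ∑ⱼ ‖X ×₁ P₁ ⋯ ×_{j−1} P_{j−1} ×ⱼ (I − Pⱼ)‖²
  ≤ ∑ⱼ ‖X − X ×ⱼ Pⱼ‖²`. -/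
theorem tnorm2_multi_proj_decomp {d : ℕ} {n : Fin d → ℕ}
    (X : ((j : Fin d) → Fin (n j)) → ℝ)
    (P : (j : Fin d) → Matrix (Fin (n j)) (Fin (n j)) ℝ)
    (hproj : ∀ j, P j * P j = P j ∧ (P j)ᵀ = P j) :
    tnorm2 (X - ttmUpTo X P d)
      = ∑ j : Fin d, tnorm2 (ttm (ttmUpTo X P j.1) j ((1 : Matrix (Fin (n j)) (Fin (n j)) ℝ) - P j))
    ∧ ∑ j : Fin d, tnorm2 (ttm (ttmUpTo X P j.1) j ((1 : Matrix (Fin (n j)) (Fin (n j)) ℝ) - P j))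
      ≤ ∑ j : Fin d, tnorm2 (X - ttm X j (P j)) := by
  have hP (j : Fin d) : IsIdempotentElem (P j) := (hproj j).1
  have hPs (j : Fin d) : (P j).IsSymm := (hproj j).2
  refine ⟨?_, Finset.sum_le_sum fun j _ => ?_⟩
  · rw [sub_ttmUpTo_eq_sum, tnorm2_sum_of_pairwise_dotProduct_eq_zero _
      (pairwise_dotProduct_ttmUpTo_one_sub_eq_zero X P hP hPs)]
  · rw [sub_ttm_eq_ttm_one_sub, ttm_ttmUpTo_of_le X P j _ le_rfl]
    exact tnorm2_ttmUpTo_le _ P hP hPs j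
end
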